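/- Let b, c > 0 be real numbers and set k = 1/c − b² + b·√(1/c + b²) and ℓ = 1/c − b² − b·√(1/c + b²). Then 2k / (3(k − ℓ) + √((k + ℓ)² + 8(k − ℓ)²)) = 1 + 2b²c − 2bc·√(1/c + b²) = (√(1 + b²c) − b√c)². -/
import Mathlib


/-- For `b, c > 0` and `k = 1/c − b² + b√(1/c + b²)`,
`ℓ = 1/c − b² − b√(1/c + b²)`, one has
`2k / (3(k − ℓ) + √((k + ℓ)² + 8(k − ℓ)²)) = 1 + 2b²c − 2bc√(1/c + b²)
  = (√(1 + b²c) − b√c)²`. -/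
theorem berger_minimality_parameter_identity
    (b c : ℝ) (hb : 0 < b) (hc : 0 < c)
    (k ℓ : ℝ)
    (hk : k = 1 / c - b ^ 2 + b * Real.sqrt (1 / c + b ^ 2))
    (hℓ : ℓ = 1 / c - b ^ 2 - b * Real.sqrt (1 / c + b ^ 2)) :
    2 * k / (3 * (k - ℓ) + Real.sqrt ((k + ℓ) ^ 2 + 8 * (k - ℓ) ^ 2)) =
      1 + 2 * b ^ 2 * c - 2 * b * c * Real.sqrt (1 / c + b ^ 2) ∧
    1 + 2 * b ^ 2 * c - 2 * b * c * Real.sqrt (1 / c + b ^ 2) =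
      (Real.sqrt (1 + b ^ 2 * c) - b * Real.sqrt c) ^ 2 := by
  set s := Real.sqrt (1 / c + b ^ 2) with hs
  have hpos : (0:ℝ) < 1 / c + b ^ 2 := by positivity
  have hs2 : s ^ 2 = 1 / c + b ^ 2 := Real.sq_sqrt hpos.le
  have hspos : 0 < s := Real.sqrt_pos.mpr hpos
  have hinner : (k + ℓ) ^ 2 + 8 * (k - ℓ) ^ 2 = (2 * (1 / c + 3 * b ^ 2)) ^ 2 := by
    subst hk hℓ; nlinarith [hs2]
  have hsqrt : Real.sqrt ((k + ℓ) ^ 2 + 8 * (k - ℓ) ^ 2) = 2 * (1 / c + 3 * b ^ 2) := by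
    rw [hinner]; exact Real.sqrt_sq (by positivity)
  constructor
  · rw [hsqrt]
    have hden : 3 * (k - ℓ) + 2 * (1 / c + 3 * b ^ 2) ≠ 0 := by
      have : 3 * (k - ℓ) + 2 * (1 / c + 3 * b ^ 2) = 6 * b * s + 2 / c + 6 * b ^ 2 := by
        subst hk hℓ; ring
      rw [this]; positivity
    rw [div_eq_iff hden]
    subst hk hℓ
    have hs2' : c * s ^ 2 = 1 + b ^ 2 * c := by
      rw [hs2]; field_simp
    field_simp
    linear_combination (12 * b ^ 2 * c) * hs2'
  · have h1 : Real.sqrt (1 + b ^ 2 * c) ^ 2 = 1 + b ^ 2 * c :=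
      Real.sq_sqrt (by positivity)
    have h2 : Real.sqrt c ^ 2 = c := Real.sq_sqrt hc.le
    have h3 : Real.sqrt (1 + b ^ 2 * c) * Real.sqrt c = c * s := by
      have he : (1 + b ^ 2 * c) * c = c ^ 2 * (1 / c + b ^ 2) := by
        field_simp
      rw [← Real.sqrt_mul (by positivity), he, Real.sqrt_mul (by positivity),
        Real.sqrt_sq hc.le, hs]
    nlinarith [h1, h2, h3]
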